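/- arXiv:2112.05378 — 2 statements merged into one kernel-verified Lean document; each statement's English description precedes it below -/
import Mathlib

section
/- Let B_{6,3} be the bicyclic graph on 6 vertices consisting of two triangles sharing a common vertex v₁ of degree 4, with one pendent edge attached at v₁. Then every orientation D of B_{6,3} satisfies M₁(D) ≤ 19, with equality if and only if D is one of the two orientations B⁽¹⁾_{6,3}, B⁽²⁾_{6,3}, where B⁽¹⁾_{6,3} is the orientation in which every arc points away from v₁ along the pendent edge and, on each triangle v₁ab, the arcs are v₁→a, v₁→b, a→b appropriately so that v₁ is a source and each triangle is oriented with both edges at v₁ leaving v₁, and B⁽²⁾_{6,3} is the reverse orientation of B⁽¹⁾_{6,3} (all arcs reversed). -/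
open Finset

attribute [local instance] Classical.propDecidable

/-- The out-degree of `u` in the digraph on `V` with arc relation `A`. -/
noncomputable def outDeg {V : Type*} [Fintype V] (A : V → V → Prop) (u : V) : ℕ :=
  (Finset.univ.filter fun v => A u v).card

/-- The in-degree of `u` in the digraph on `V` with arc relation `A`. -/
noncomputable def inDeg {V : Type*} [Fintype V] (A : V → V → Prop) (u : V) : ℕ :=
  (Finset.univ.filter fun v => A v u).card

/-- The first Zagreb index of a digraph: `(1/2) · ∑_{uv ∈ A} (d⁺_u + d⁻_v)`. -/
noncomputable def M1D {V : Type*} [Fintype V] (A : V → V → Prop) : ℚ :=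
  (1 / 2) * ∑ u : V, ∑ v : V, if A u v then ((outDeg A u : ℚ) + (inDeg A v : ℚ)) else 0

/-- `A` is an orientation of the simple graph `G`: every edge of `G` is replaced by
exactly one of the two possible arcs. -/
def IsOrientation {V : Type*} (G : SimpleGraph V) (A : V → V → Prop) : Prop :=
  (∀ u v, G.Adj u v ↔ (A u v ∨ A v u)) ∧ ∀ u v, ¬(A u v ∧ A v u)

/-- A sink-source orientation: every vertex has out-degree 0 or in-degree 0. -/
def IsSinkSource {V : Type*} [Fintype V] (A : V → V → Prop) : Prop :=
  ∀ u, outDeg A u = 0 ∨ inDeg A u = 0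

/-- The first Zagreb index of a simple graph: `∑_{uv ∈ E(G)} (d_G(u) + d_G(v))`. -/
noncomputable def M1G {V : Type*} [Fintype V] (G : SimpleGraph V) : ℕ :=
  ∑ e ∈ G.edgeFinset,
    Sym2.lift ⟨fun u v => G.degree u + G.degree v, fun _ _ => Nat.add_comm _ _⟩ e

/-- The arcs of the extremal orientation `B⁽¹⁾_{n,m}` (on vertex labels in `ℕ`).
Vertex `0` is the common center of the two triangles `{0,1,2}` and `{0,3,4}`;
the `n - 2m + 1` pendent vertices are `5, …, n - 2m + 5`; the `m - 3` attached paths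
of length two are `0 — (n-2m+6+2k) — (n-2m+6+2k+1)` for `0 ≤ k ≤ m - 4`.
The center `0` is a source, each triangle `0ab` is oriented `0→a`, `0→b`, `a→b`,
every pendent arc leaves `0`, and on each attached path the middle vertex is a sink,
i.e. the arcs are `0 → mid` and `end → mid`. -/
def B1Rel (n m : ℕ) (i j : ℕ) : Prop :=
  (i = 0 ∧ j = 1) ∨ (i = 0 ∧ j = 2) ∨ (i = 1 ∧ j = 2) ∨
  (i = 0 ∧ j = 3) ∨ (i = 0 ∧ j = 4) ∨ (i = 3 ∧ j = 4) ∨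
  (i = 0 ∧ 5 ≤ j ∧ j < n - 2 * m + 6) ∨
  (i = 0 ∧ n - 2 * m + 6 ≤ j ∧ j < n ∧ (j - (n - 2 * m + 6)) % 2 = 0) ∨
  (n - 2 * m + 6 ≤ j ∧ j < n ∧ (j - (n - 2 * m + 6)) % 2 = 0 ∧ i = j + 1 ∧ i < n)

/-- The bicyclic graph `B_{n,m}`: two triangles sharing a common center vertex, with
`n - 2m + 1` pendent edges and `m - 3` paths of length two attached to the center. -/
def Bnm (n m : ℕ) : SimpleGraph (Fin n) :=
  SimpleGraph.fromRel fun i j => B1Rel n m (i : ℕ) (j : ℕ)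

/-- The extremal orientation `B⁽¹⁾_{n,m}` of `B_{n,m}`, in which the center is a source. -/
def B1 (n m : ℕ) : Fin n → Fin n → Prop := fun i j => B1Rel n m (i : ℕ) (j : ℕ)

/-- The extremal orientation `B⁽²⁾_{n,m}` of `B_{n,m}`: the reverse of `B⁽¹⁾_{n,m}`,
in which the center is a sink. -/
def B2 (n m : ℕ) : Fin n → Fin n → Prop := fun i j => B1Rel n m (j : ℕ) (i : ℕ)


/-! Summing over arcs vertex by vertex gives `M₁(D) = ½ ∑ᵤ ((d⁺ᵤ)² + (d⁻ᵤ)²)`. Since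
`d² - (d⁺)² - (d⁻)² = 2 d⁺ d⁻`, this is `½ ∑ᵤ dᵤ² = 21` for `B_{6,3}` minus `d⁺ᵤ d⁻ᵤ` at every
vertex carrying both an in-arc and an out-arc. Every orientation of a triangle has such a
vertex; at a vertex of degree 2 it costs 1 and at the centre at least 4. Hence `M₁(D) ≤ 19`,
with equality exactly when the centre is a source or a sink, which leaves the choice of the
direction of the edge opposite the centre in each triangle: these are `B⁽¹⁾` and `B⁽²⁾` up to
swapping the two outer vertices of a triangle. An orientation of `B_{6,3}` is fixed by the
directions of its seven edges, and the `2⁷` cases are checked by computation. -/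
section Digraph

variable {V : Type*} [Fintype V]

theorem M1D_eq_sum_sq (A : V → V → Prop) :
    M1D A = (1 / 2) * ∑ u, ((outDeg A u : ℚ) ^ 2 + (inDeg A u : ℚ) ^ 2) := by
  have hout : ∀ u, ∑ v, (if A u v then (outDeg A u : ℚ) else 0) = (outDeg A u : ℚ) ^ 2 := by
    intro u
    rw [← Finset.sum_filter, sum_const, nsmul_eq_mul, sq, outDeg]
  have hin : ∀ v, ∑ u, (if A u v then (inDeg A v : ℚ) else 0) = (inDeg A v : ℚ) ^ 2 := by
    intro v
    rw [← Finset.sum_filter, sum_const, nsmul_eq_mul, sq, inDeg]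
  simp only [M1D, ite_add_zero, sum_add_distrib, hout]
  rw [Finset.sum_comm (f := fun u v => if A u v then (inDeg A v : ℚ) else 0)]
  simp only [hin]

def doubleM1 (R : V → V → Bool) : ℕ :=
  ∑ u, (#{v | R u v} ^ 2 + #{v | R v u} ^ 2)

theorem M1D_eq_doubleM1 (R : V → V → Bool) :
    M1D (fun x y => R x y = true) = doubleM1 R / 2 := by
  simp only [M1D_eq_sum_sq, doubleM1, outDeg, inDeg, Nat.cast_sum, Nat.cast_add, Nat.cast_pow]
  rw [mul_comm, ← div_eq_mul_one_div]

theorem outDeg_comp_equiv {W : Type*} [Fintype W] (e : V ≃ W) (A : W → W → Prop) (u : V) :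
    outDeg (fun x y => A (e x) (e y)) u = outDeg A (e u) :=
  Finset.card_equiv e (by simp)

theorem inDeg_comp_equiv {W : Type*} [Fintype W] (e : V ≃ W) (A : W → W → Prop) (u : V) :
    inDeg (fun x y => A (e x) (e y)) u = inDeg A (e u) :=
  Finset.card_equiv e (by simp)

theorem M1D_eq_of_equiv {W : Type*} [Fintype W] (e : V ≃ W) {A : V → V → Prop}
    {B : W → W → Prop} (h : ∀ x y, A x y ↔ B (e x) (e y)) : M1D A = M1D B := by
  obtain rfl : A = fun x y => B (e x) (e y) := funext₂ fun x y => propext (h x y)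
  simp only [M1D_eq_sum_sq, outDeg_comp_equiv, inDeg_comp_equiv]
  rw [e.sum_comp (fun w => (outDeg B w : ℚ) ^ 2 + (inDeg B w : ℚ) ^ 2)]

theorem M1D_flip (A : V → V → Prop) : M1D (flip A) = M1D A := by
  simp only [M1D_eq_sum_sq]
  exact congrArg _ (sum_congr rfl fun u _ => add_comm _ _)

end Digraph

section Orientation

variable {V : Type*} {G : SimpleGraph V} {A : V → V → Prop}

theorem IsOrientation.swap_iff_not (hA : IsOrientation G A) {x y : V} (h : G.Adj x y) :
    A y x ↔ ¬A x y := by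
  have := (hA.1 x y).1 h
  have := hA.2 x y
  tauto

theorem IsOrientation.not_of_not_adj (hA : IsOrientation G A) {x y : V} (h : ¬G.Adj x y) :
    ¬A x y :=
  fun hxy => h ((hA.1 x y).2 (.inl hxy))

theorem IsOrientation.iff_of_lt [LinearOrder V] {B : V → V → Prop} (hA : IsOrientation G A)
    (hB : IsOrientation G B) (h : ∀ x y, G.Adj x y → x < y → (A x y ↔ B x y)) (x y : V) :
    A x y ↔ B x y := by
  by_cases hxy : G.Adj x y
  · rcases lt_or_gt_of_ne hxy.ne with hlt | hlt
    · exact h x y hxy hlt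
    · rw [hA.swap_iff_not hxy.symm, hB.swap_iff_not hxy.symm, h y x hxy.symm hlt]
  · exact iff_of_false (hA.not_of_not_adj hxy) (hB.not_of_not_adj hxy)

end Orientation

def orient63 (b₁ b₂ b₃ b₄ b₅ b₆ b₇ : Bool) : Fin 6 → Fin 6 → Bool := fun u v =>
  match u, v with
  | 0, 1 => b₁ | 1, 0 => !b₁
  | 0, 2 => b₂ | 2, 0 => !b₂
  | 1, 2 => b₃ | 2, 1 => !b₃
  | 0, 3 => b₄ | 3, 0 => !b₄
  | 0, 4 => b₅ | 4, 0 => !b₅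
  | 3, 4 => b₆ | 4, 3 => !b₆
  | 0, 5 => b₇ | 5, 0 => !b₇
  | _, _ => false

def b1Table63 : Fin 6 → Fin 6 → Bool := orient63 true true true true true true true

theorem B1_six_three_iff (x y : Fin 6) : B1 6 3 x y ↔ b1Table63 x y = true := by
  revert x y; unfold B1 B1Rel; decide

theorem Bnm_six_three_adj_iff (x y : Fin 6) :
    (Bnm 6 3).Adj x y ↔ (b1Table63 x y || b1Table63 y x) = true := by
  rw [Bnm, SimpleGraph.fromRel_adj]
  revert x y; unfold B1Rel; decide

theorem isOrientation_orient63 (b₁ b₂ b₃ b₄ b₅ b₆ b₇ : Bool) :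
    IsOrientation (Bnm 6 3) fun x y => orient63 b₁ b₂ b₃ b₄ b₅ b₆ b₇ x y = true := by
  simp only [IsOrientation, Bnm_six_three_adj_iff]
  revert b₁ b₂ b₃ b₄ b₅ b₆ b₇
  decide

theorem IsOrientation.exists_eq_orient63 {A : Fin 6 → Fin 6 → Prop}
    (hA : IsOrientation (Bnm 6 3) A) : ∃ b₁ b₂ b₃ b₄ b₅ b₆ b₇ : Bool,
      A = fun x y => orient63 b₁ b₂ b₃ b₄ b₅ b₆ b₇ x y = true := by
  refine ⟨A 0 1, A 0 2, A 1 2, A 0 3, A 0 4, A 3 4, A 0 5,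
    funext₂ fun x y => propext (hA.iff_of_lt (isOrientation_orient63 ..) ?_ x y)⟩
  intro x y hxy hlt
  rw [Bnm_six_three_adj_iff] at hxy
  fin_cases x <;> fin_cases y <;> simp_all [b1Table63, orient63]

theorem doubleM1_orient63_le : ∀ b₁ b₂ b₃ b₄ b₅ b₆ b₇ : Bool,
    doubleM1 (orient63 b₁ b₂ b₃ b₄ b₅ b₆ b₇) ≤ 38 := by
  decide

def swaps63 : List (Equiv.Perm (Fin 6)) :=
  [1, Equiv.swap 1 2, Equiv.swap 3 4, Equiv.swap 1 2 * Equiv.swap 3 4]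

set_option maxRecDepth 10000 in
theorem orient63_of_doubleM1_eq : ∀ b₁ b₂ b₃ b₄ b₅ b₆ b₇ : Bool,
    doubleM1 (orient63 b₁ b₂ b₃ b₄ b₅ b₆ b₇) = 38 → ∃ σ ∈ swaps63,
      (∀ x y, orient63 b₁ b₂ b₃ b₄ b₅ b₆ b₇ x y = b1Table63 (σ x) (σ y)) ∨
      (∀ x y, orient63 b₁ b₂ b₃ b₄ b₅ b₆ b₇ x y = b1Table63 (σ y) (σ x)) := by
  decide

set_option maxRecDepth 10000 in
theorem swaps63_preserve_adj : ∀ σ ∈ swaps63, ∀ x y,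
    (b1Table63 (σ x) (σ y) || b1Table63 (σ y) (σ x)) = (b1Table63 x y || b1Table63 y x) := by
  decide

theorem exists_iso_of_doubleM1_orient63_eq {b₁ b₂ b₃ b₄ b₅ b₆ b₇ : Bool}
    (h : doubleM1 (orient63 b₁ b₂ b₃ b₄ b₅ b₆ b₇) = 38) : ∃ φ : Bnm 6 3 ≃g Bnm 6 3,
      (∀ x y, orient63 b₁ b₂ b₃ b₄ b₅ b₆ b₇ x y = true ↔ B1 6 3 (φ x) (φ y)) ∨
      (∀ x y, orient63 b₁ b₂ b₃ b₄ b₅ b₆ b₇ x y = true ↔ B2 6 3 (φ x) (φ y)) := by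
  obtain ⟨σ, hσ, hR⟩ := orient63_of_doubleM1_eq _ _ _ _ _ _ _ h
  refine ⟨⟨σ, by simp only [Bnm_six_three_adj_iff, swaps63_preserve_adj σ hσ, implies_true]⟩, ?_⟩
  rcases hR with hR | hR
  · exact .inl fun x y => by rw [hR]; exact (B1_six_three_iff _ _).symm
  · exact .inr fun x y => by rw [hR]; exact (B1_six_three_iff _ _).symm

theorem M1D_B1_six_three : M1D (B1 6 3) = 19 := by
  rw [show B1 6 3 = fun x y => b1Table63 x y = true from
    funext₂ fun x y => propext (B1_six_three_iff x y), M1D_eq_doubleM1,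
    show doubleM1 b1Table63 = 38 by decide]
  norm_num

theorem M1D_B2_six_three : M1D (B2 6 3) = 19 :=
  (M1D_flip (B1 6 3)).trans M1D_B1_six_three

theorem M1D_eq_nineteen_of_iso {A : Fin 6 → Fin 6 → Prop}
    (h : ∃ φ : Bnm 6 3 ≃g Bnm 6 3,
      (∀ x y, A x y ↔ B1 6 3 (φ x) (φ y)) ∨ (∀ x y, A x y ↔ B2 6 3 (φ x) (φ y))) :
    M1D A = 19 := by
  obtain ⟨φ, h | h⟩ := h
  · rw [M1D_eq_of_equiv φ.toEquiv h, M1D_B1_six_three]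
  · rw [M1D_eq_of_equiv φ.toEquiv h, M1D_B2_six_three]

theorem stmt6 (A : Fin 6 → Fin 6 → Prop) (hA : IsOrientation (Bnm 6 3) A) :
    M1D A ≤ 19 ∧
      (M1D A = 19 ↔
        ∃ φ : Bnm 6 3 ≃g Bnm 6 3,
          (∀ x y, A x y ↔ B1 6 3 (φ x) (φ y)) ∨ (∀ x y, A x y ↔ B2 6 3 (φ x) (φ y))) := by
  obtain ⟨b₁, b₂, b₃, b₄, b₅, b₆, b₇, rfl⟩ := hA.exists_eq_orient63
  refine ⟨?_, fun h19 => exists_iso_of_doubleM1_orient63_eq ?_, M1D_eq_nineteen_of_iso⟩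
  · rw [M1D_eq_doubleM1, div_le_iff₀ two_pos]
    exact_mod_cast (doubleM1_orient63_le b₁ b₂ b₃ b₄ b₅ b₆ b₇).trans_eq (by norm_num)
  · rw [M1D_eq_doubleM1, div_eq_iff two_ne_zero] at h19
    norm_num at h19
    exact_mod_cast h19
end

section
/- Let G be a simple graph that contains an odd cycle (i.e., G is not bipartite), without isolated vertices, and let D be any orientation of G. Then M₁(D) < M₁(G)/2. -/
open Finset

attribute [local instance] Classical.propDecidable

/-!
Every vertex `v` has `d(v) = d⁺(v) + d⁻(v)`. Counting each arc from both of its ends gives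
`2 M₁(D) = ∑ (d⁺(v)² + d⁻(v)²)` and `M₁(G) = ∑ (d⁺(v) + d⁻(v))²`, so `M₁(G) - 2 M₁(D)` is
`2 ∑ d⁺(v) d⁻(v)`. This vanishes only for a sink-source orientation, and a sink-source
orientation 2-colours `G` by sources and sinks; an odd cycle forbids that.
-/

section

variable {V : Type*} [Fintype V]

theorem sum_sum_ite_add {M : Type*} [AddCommMonoid M] (A : V → V → Prop) (f g : V → M) :
    ∑ u, ∑ v, (if A u v then f u + g v else 0) = ∑ u, outDeg A u • f u + ∑ v, inDeg A v • g v := by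
  simp only [ite_add_zero, sum_add_distrib]
  rw [sum_comm (f := fun u v => if A u v then g v else 0)]
  simp only [← sum_filter, sum_const, outDeg, inDeg]

theorem two_mul_M1D (A : V → V → Prop) :
    2 * M1D A = ∑ v, ((outDeg A v : ℚ) ^ 2 + (inDeg A v : ℚ) ^ 2) := by
  rw [M1D, ← mul_assoc, sum_sum_ite_add, sum_add_distrib]
  simp only [nsmul_eq_mul, sq]
  ring

variable {A : V → V → Prop}

theorem IsSinkSource.colorable_two {G : SimpleGraph V} (hA : IsOrientation G A)
    (h : IsSinkSource A) : G.Colorable 2 := by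
  have outDeg_pos : ∀ {u v}, A u v → 0 < outDeg A u := fun huv =>
    card_pos.2 ⟨_, mem_filter.2 ⟨mem_univ _, huv⟩⟩
  have inDeg_pos : ∀ {u v}, A u v → 0 < inDeg A v := fun huv =>
    card_pos.2 ⟨_, mem_filter.2 ⟨mem_univ _, huv⟩⟩
  have sources_ne_sinks : ∀ {u v}, A u v → (outDeg A u = 0 ↔ outDeg A v = 0) → False :=
    fun {u v} huv hiff => by
      have := h v
      have := outDeg_pos huv
      have := inDeg_pos huv
      omega
  refine ⟨SimpleGraph.Coloring.mk (fun w => if outDeg A w = 0 then (0 : Fin 2) else 1) ?_⟩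
  intro u v huv hcol
  rcases (hA.1 u v).1 huv with h' | h' <;>
    exact sources_ne_sinks h' (by split_ifs at hcol <;> simp_all)

namespace IsOrientation

variable {G : SimpleGraph V}

theorem degree_eq (hA : IsOrientation G A) (u : V) :
    G.degree u = outDeg A u + inDeg A u := by
  rw [← SimpleGraph.card_neighborFinset_eq_degree, SimpleGraph.neighborFinset_eq_filter,
    outDeg, inDeg, ← card_union_of_disjoint]
  · congr 1
    ext v
    simp only [mem_filter, mem_union, mem_univ, true_and]
    exact hA.1 u v
  · exact disjoint_filter.2 fun v _ h1 h2 => hA.2 u v ⟨h1, h2⟩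

theorem M1G_eq_sum_sum_ite (hA : IsOrientation G A) :
    M1G G = ∑ u, ∑ v, if A u v then G.degree u + G.degree v else 0 := by
  rw [M1G, ← sum_product', ← sum_filter]
  symm
  refine sum_bij (fun p _ => s(p.1, p.2)) ?_ ?_ ?_ ?_
  · rintro ⟨u, v⟩ huv
    exact SimpleGraph.mem_edgeFinset.2 ((hA.1 u v).2 (Or.inl (mem_filter.1 huv).2))
  · rintro ⟨u, v⟩ huv ⟨u', v'⟩ huv' heq
    rcases Sym2.eq_iff.1 heq with ⟨rfl, rfl⟩ | ⟨rfl, rfl⟩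
    · rfl
    · exact (hA.2 u v ⟨(mem_filter.1 huv).2, (mem_filter.1 huv').2⟩).elim
  · intro e he
    induction e using Sym2.ind with
    | h u v =>
      rcases (hA.1 u v).1 (SimpleGraph.mem_edgeFinset.1 he) with huv | hvu
      · exact ⟨(u, v), mem_filter.2 ⟨mem_univ _, huv⟩, rfl⟩
      · exact ⟨(v, u), mem_filter.2 ⟨mem_univ _, hvu⟩, Sym2.eq_swap⟩
  · intro p _
    rfl

theorem M1G_eq_sum_sq (hA : IsOrientation G A) :
    M1G G = ∑ v, (outDeg A v + inDeg A v) ^ 2 := by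
  rw [hA.M1G_eq_sum_sum_ite, sum_sum_ite_add, ← sum_add_distrib]
  refine sum_congr rfl fun v _ => ?_
  rw [hA.degree_eq, smul_eq_mul, smul_eq_mul]
  ring

end IsOrientation

end

theorem stmt17_general {V : Type*} [Fintype V] (G : SimpleGraph V)
    (hodd : ¬ G.Colorable 2)
    (A : V → V → Prop) (hA : IsOrientation G A) :
    M1D A < (M1G G : ℚ) / 2 := by
  obtain ⟨w, hw_out, hw_in⟩ : ∃ w, outDeg A w ≠ 0 ∧ inDeg A w ≠ 0 := by
    simpa [IsSinkSource, not_or] using mt (IsSinkSource.colorable_two hA) hodd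
  have hsum : ∑ v, (outDeg A v ^ 2 + inDeg A v ^ 2) < ∑ v, (outDeg A v + inDeg A v) ^ 2 := by
    refine sum_lt_sum (fun v _ => ?_) ⟨w, mem_univ _, ?_⟩ <;> rw [add_sq]
    · linarith [Nat.zero_le (2 * outDeg A v * inDeg A v)]
    · have := Nat.mul_pos (Nat.mul_pos two_pos (Nat.pos_of_ne_zero hw_out))
        (Nat.pos_of_ne_zero hw_in)
      linarith
  have : 2 * M1D A < M1G G := by
    rw [two_mul_M1D, hA.M1G_eq_sum_sq]
    exact_mod_cast hsum
  linarith

theorem stmt17 {V : Type*} [Fintype V] (G : SimpleGraph V)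
    (hodd : ¬ G.Colorable 2) (hiso : ∀ v : V, 0 < G.degree v)
    (A : V → V → Prop) (hA : IsOrientation G A) :
    M1D A < (M1G G : ℚ) / 2 :=
  stmt17_general G hodd A hA
end
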